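/- The relation ≫ associated with a winning strategy is well-founded: let Σ be a winning strategy of player P in a parity game on a tree t, and let act(Σ) be the set of active positions (positions u ∈ Σ labelled with a P-losing priority such that no strict prefix of u is labelled by a strictly smaller priority or by ~). Define u ≫ w iff u,w ∈ Σ, u ≺ w, and some w' ∈ act(Σ) satisfies u ⪯ w' ⪯ w. Then ≫ has no infinite descending chain. -/

import Mathlib

namespace UnambSig

/-- The symbols of the alphabet `A^~_{i,k}`: unary priority symbols `p j`,
binary choice symbols of the two players (`true` is player 1), and the unary
player-swapping symbol `~`. -/
inductive Sym where
  | pri : ℕ → Sym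
  | choice : Bool → Sym
  | neg : Sym
deriving DecidableEq

/-- Arity of a symbol. -/
def Sym.arity : Sym → ℕ
  | .pri _ => 1
  | .choice _ => 2
  | .neg => 1

/-- A labelling of potential tree nodes (lists of directions, from the root). -/
abbrev Label := List ℕ → Option Sym

/-- `t` is a tree over the alphabet `A^~_{i,k}`: the root is defined, children
match arities, the domain is closed and priorities are within `{i,…,k}`. -/
def IsTree (t : Label) (i k : ℕ) : Prop :=
  t [] ≠ none ∧
  (∀ u s, t u = some s → ∀ d : ℕ, (t (u ++ [d]) ≠ none ↔ d < s.arity)) ∧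
  (∀ u (d : ℕ), t u = none → t (u ++ [d]) = none) ∧
  (∀ u j, t u = some (Sym.pri j) → i ≤ j ∧ j ≤ k)

/-- The number of strict ancestors of `u` labelled by `~`. -/
def tildeCount (t : Label) (u : List ℕ) : ℕ :=
  (List.range u.length).countP (fun m => decide (t (u.take m) = some Sym.neg))

/-- A node is kept if it has an even number of `~`-labelled strict ancestors. -/
def kept (t : Label) (u : List ℕ) : Prop := tildeCount t u % 2 = 0

instance (t : Label) (u : List ℕ) : Decidable (kept t u) := by
  unfold kept; infer_instance

/-- The node of a branch `α` at depth `n`. -/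
def pref (α : ℕ → ℕ) (n : ℕ) : List ℕ := (List.range n).map α

/-- `α` is an infinite branch of `t`. -/
def IsBranch (t : Label) (α : ℕ → ℕ) : Prop := ∀ n, t (pref α n) ≠ none

/-- `t` is well-formed: no branch contains infinitely many `~`. -/
def WellFormed (t : Label) : Prop :=
  ∀ α : ℕ → ℕ, IsBranch t α → {n : ℕ | t (pref α n) = some Sym.neg}.Finite

/-- `t` is a well-formed tree over `A^~_{i,k}`. -/
def GoodTree (t : Label) (i k : ℕ) : Prop := IsTree t i k ∧ WellFormed t

/-- The effective priority of a node: the labelled priority, shifted by one at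
switched nodes (each `~` swaps the players). -/
def effPri (t : Label) (u : List ℕ) : Option ℕ :=
  match t u with
  | some (Sym.pri j) => some (if kept t u then j else j + 1)
  | _ => none

/-- The player controlling a node: the player named by the choice symbol,
swapped if the node is switched. -/
def ctrl (t : Label) (u : List ℕ) : Option Bool :=
  match t u with
  | some (Sym.choice Q) => some (if kept t u then Q else !Q)
  | _ => none

/-- The effective priority `j` appears infinitely often on the branch `α`. -/
def InfOften (t : Label) (α : ℕ → ℕ) (j : ℕ) : Prop :=
  {n : ℕ | effPri t (pref α n) = some j}.Infinite

/-- The branch `α` is winning for player `P` in the game `G(t)`: the least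
effective priority occurring infinitely often has the parity favourable to `P`
(even for player 1 = `true`). -/
def WinsBranch (t : Label) (P : Bool) (α : ℕ → ℕ) : Prop :=
  ∃ j, InfOften t α j ∧ (∀ j' < j, ¬ InfOften t α j') ∧ (Even j ↔ P = true)

/-- A strategy of player `P` in `G(t)`, identified (since the arena is a tree)
with a prefix-closed set of nodes: deterministic at `P`'s positions and full at
the other positions. -/
def IsStrategy (t : Label) (P : Bool) (S : List ℕ → Prop) : Prop :=
  S [] ∧
  (∀ u, S u → t u ≠ none) ∧
  (∀ u (d : ℕ), S (u ++ [d]) → S u) ∧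
  (∀ u, S u → ctrl t u = some P → ∃! d : ℕ, S (u ++ [d])) ∧
  (∀ u (d : ℕ), S u → ctrl t u ≠ some P → t (u ++ [d]) ≠ none → S (u ++ [d]))

/-- An infinite play of `S`: a branch all of whose prefixes belong to `S`. -/
def IsPlayOf (S : List ℕ → Prop) (α : ℕ → ℕ) : Prop := ∀ n, S (pref α n)

/-- A winning strategy of `P`: all its infinite plays are winning for `P`. -/
def IsWinningStrategy (t : Label) (P : Bool) (S : List ℕ → Prop) : Prop :=
  IsStrategy t P S ∧ ∀ α, IsPlayOf S α → WinsBranch t P α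

/-- `j` is a `P`-losing priority: within `{i,…,k}` and of the parity
unfavourable to `P` (odd for player 1 = `true`). -/
def PLosing (i k : ℕ) (P : Bool) (j : ℕ) : Prop :=
  i ≤ j ∧ j ≤ k ∧ (Odd j ↔ P = true)

/-- `j` is a `P`-winning priority. -/
def PWinning (i k : ℕ) (P : Bool) (j : ℕ) : Prop :=
  i ≤ j ∧ j ≤ k ∧ ¬ (Odd j ↔ P = true)

/-- A position `u` of the strategy `S` is active: it carries a `P`-losing
priority `j` and no strict ancestor is labelled `~` or by a smaller priority. -/
def Active (t : Label) (i k : ℕ) (P : Bool) (S : List ℕ → Prop) (u : List ℕ) : Prop :=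
  S u ∧ ∃ j, t u = some (Sym.pri j) ∧ PLosing i k P j ∧
    ∀ w, w <+: u → w ≠ u →
      (t w ≠ some Sym.neg ∧ ∀ j', t w = some (Sym.pri j') → j ≤ j')

/-- `w` is a `⪯`-minimal active position above `u` (an element of `suk_u(Σ)`). -/
def Suk (t : Label) (i k : ℕ) (P : Bool) (S : List ℕ → Prop) (u w : List ℕ) : Prop :=
  Active t i k P S w ∧ u <+: w ∧
    ∀ w', Active t i k P S w' → u <+: w' → w' <+: w → w' = w

/-- The relation `u ≫ w` associated with the strategy `S`. -/
def Gg (t : Label) (i k : ℕ) (P : Bool) (S : List ℕ → Prop) (u w : List ℕ) : Prop :=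
  S u ∧ S w ∧ u <+: w ∧ u ≠ w ∧
    ∃ w', Active t i k P S w' ∧ u <+: w' ∧ w' <+: w

/-- Lexicographic strict order on `P`-signatures (tuples of ordinals indexed by
the `P`-losing priorities; smaller indices are more significant). -/
def sigLt (i k : ℕ) (P : Bool) (σ τ : ℕ → Ordinal) : Prop :=
  ∃ j, PLosing i k P j ∧ σ j < τ j ∧
    ∀ j', PLosing i k P j' → j' < j → σ j' = τ j'

/-- Equality of `P`-signatures (on the relevant coordinates). -/
def sigEq (i k : ℕ) (P : Bool) (σ τ : ℕ → Ordinal) : Prop :=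
  ∀ j, PLosing i k P j → σ j = τ j

/-- Lexicographic order on `P`-signatures. -/
def sigLe (i k : ℕ) (P : Bool) (σ τ : ℕ → Ordinal) : Prop :=
  sigLt i k P σ τ ∨ sigEq i k P σ τ

/-- Lexicographic strict order on prefixes `σ↾ℓ` of `P`-signatures. -/
def sigLtBelow (i k : ℕ) (P : Bool) (ℓ : ℕ) (σ τ : ℕ → Ordinal) : Prop :=
  ∃ j, PLosing i k P j ∧ j ≤ ℓ ∧ σ j < τ j ∧
    ∀ j', PLosing i k P j' → j' < j → σ j' = τ j'

/-- Equality of the prefixes `σ↾ℓ`. -/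
def sigEqBelow (i k : ℕ) (P : Bool) (ℓ : ℕ) (σ τ : ℕ → Ordinal) : Prop :=
  ∀ j, PLosing i k P j → j ≤ ℓ → σ j = τ j

/-- Lexicographic order on the prefixes `σ↾ℓ`. -/
def sigLeBelow (i k : ℕ) (P : Bool) (ℓ : ℕ) (σ τ : ℕ → Ordinal) : Prop :=
  sigLtBelow i k P ℓ σ τ ∨ sigEqBelow i k P ℓ σ τ

/-- Order on signatures extended by `∞` (represented by `none`) as maximum. -/
def extLe (i k : ℕ) (P : Bool) : Option (ℕ → Ordinal) → Option (ℕ → Ordinal) → Prop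
  | _, none => True
  | none, some _ => False
  | some σ, some τ => sigLe i k P σ τ

/-- Equality of signatures extended by `∞`. -/
def extEq (i k : ℕ) (P : Bool) : Option (ℕ → Ordinal) → Option (ℕ → Ordinal) → Prop
  | none, none => True
  | some σ, some τ => sigEq i k P σ τ
  | _, _ => False

/-- Order on prefixes `σ↾ℓ` of signatures extended by `∞`. -/
def extLeBelow (i k : ℕ) (P : Bool) (ℓ : ℕ) :
    Option (ℕ → Ordinal) → Option (ℕ → Ordinal) → Prop
  | _, none => True
  | none, some _ => False
  | some σ, some τ => sigLeBelow i k P ℓ σ τ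

/-- Strict order on prefixes `σ↾ℓ` of signatures extended by `∞`. -/
def extLtBelow (i k : ℕ) (P : Bool) (ℓ : ℕ) :
    Option (ℕ → Ordinal) → Option (ℕ → Ordinal) → Prop
  | none, _ => False
  | some _, none => True
  | some σ, some τ => sigLtBelow i k P ℓ σ τ

/-- `s` is the signature assignment `s(·,Σ)` of the strategy `S`: at an active
node with priority `j`, the coordinate `j` of the child's value is incremented
by one and the later coordinates are zeroed; at a non-active node of `S`, the
value is the least upper bound (in the lexicographic order) of the values at
the `⪯`-minimal active descendants. -/
def SigDef (t : Label) (i k : ℕ) (P : Bool) (S : List ℕ → Prop)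
    (s : List ℕ → ℕ → Ordinal) : Prop :=
  (∀ u j, Active t i k P S u → t u = some (Sym.pri j) →
    ∀ j', PLosing i k P j' →
      (j' < j → s u j' = s (u ++ [0]) j') ∧
      (j' = j → s u j' = s (u ++ [0]) j + 1) ∧
      (j < j' → s u j' = 0)) ∧
  (∀ u, S u → ¬ Active t i k P S u →
    (∀ w, Suk t i k P S u w → sigLe i k P (s w) (s u)) ∧
    (∀ τ, (∀ w, Suk t i k P S u w → sigLe i k P (s w) τ) → sigLe i k P (s u) τ))

/-- The subtree of `t` rooted at `u`. -/
def subtree (t : Label) (u : List ℕ) : Label := fun w => t (u ++ w)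

/-- The tree with a unary root symbol `s` and subtree `t`. -/
def node1 (s : Sym) (t : Label) : Label := fun u =>
  match u with
  | [] => some s
  | 0 :: w => t w
  | _ => none

/-- The tree with root the binary choice symbol of player `b` and the given
left and right subtrees. -/
def node2 (b : Bool) (tL tR : Label) : Label := fun u =>
  match u with
  | [] => some (Sym.choice b)
  | 0 :: w => tL w
  | 1 :: w => tR w
  | _ => none

/-- `σ` is the value `s(ε,Σ)` of some winning strategy `Σ` of `P` in `G(t)`. -/
def ValOf (t : Label) (i k : ℕ) (P : Bool) (σ : ℕ → Ordinal) : Prop :=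
  ∃ (S : List ℕ → Prop) (s : List ℕ → ℕ → Ordinal),
    IsWinningStrategy t P S ∧ SigDef t i k P S s ∧ sigEq i k P σ (s [])

/-- `σ` is the signature `σ_P(t)`: the lexicographic infimum (= minimum) of the
values of the winning strategies of `P` in `G(t)`. -/
def IsSigOf (t : Label) (i k : ℕ) (P : Bool) (σ : ℕ → Ordinal) : Prop :=
  ValOf t i k P σ ∧ ∀ τ, ValOf t i k P τ → sigLe i k P σ τ

/-- `a` is the extended signature `σ_P(t)`, with `none` representing `∞`
(no winning strategy of `P` exists). -/
def IsExtSigOf (t : Label) (i k : ℕ) (P : Bool) : Option (ℕ → Ordinal) → Prop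
  | none => ¬ ∃ S : List ℕ → Prop, IsWinningStrategy t P S
  | some σ => IsSigOf t i k P σ

/-- The six invariants of the signature lemma for a pair of assignments
`σ' : Bool → Label → Option (ℕ → Ordinal)` (with `none` playing the role of
`∞`): (1) `σ'_P(t) = ∞` iff `P` loses `G(t)`; (2) `σ'_P(~(t)) = (0,…,0)` if `P`
wins `G(~(t))`; (3) prepending a `P`-winning priority `j` keeps the coordinates
below `j` and zeroes the ones `≥ j`; (4) prepending a `P`-losing priority `j`
increments coordinate `j` and zeroes the later ones; (5) the min rule at `P`'s
choice nodes; (6) the max rule at the opponent's choice nodes. -/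
def SigInvariants (i k : ℕ) (σ' : Bool → Label → Option (ℕ → Ordinal)) : Prop :=
  (∀ (P : Bool) (t : Label), GoodTree t i k →
    (σ' P t = none ↔ ¬ ∃ S : List ℕ → Prop, IsWinningStrategy t P S)) ∧
  (∀ (P : Bool) (t : Label), GoodTree t i k →
    (∃ S : List ℕ → Prop, IsWinningStrategy (node1 Sym.neg t) P S) →
    ∃ τ, σ' P (node1 Sym.neg t) = some τ ∧ ∀ j, PLosing i k P j → τ j = 0) ∧
  (∀ (P : Bool) (t : Label) (j : ℕ) (τ : ℕ → Ordinal), GoodTree t i k →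
    PWinning i k P j → σ' P t = some τ →
    ∃ τ', σ' P (node1 (Sym.pri j) t) = some τ' ∧ ∀ j', PLosing i k P j' →
      (j' < j → τ' j' = τ j') ∧ (j ≤ j' → τ' j' = 0)) ∧
  (∀ (P : Bool) (t : Label) (j : ℕ) (τ : ℕ → Ordinal), GoodTree t i k →
    PLosing i k P j → σ' P t = some τ →
    ∃ τ', σ' P (node1 (Sym.pri j) t) = some τ' ∧ ∀ j', PLosing i k P j' →
      (j' < j → τ' j' = τ j') ∧ (j' = j → τ' j' = τ j + 1) ∧ (j < j' → τ' j' = 0)) ∧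
  (∀ (P : Bool) (tL tR : Label), GoodTree tL i k → GoodTree tR i k →
    (extLe i k P (σ' P tL) (σ' P tR) →
      extEq i k P (σ' P (node2 P tL tR)) (σ' P tL)) ∧
    (extLe i k P (σ' P tR) (σ' P tL) →
      extEq i k P (σ' P (node2 P tL tR)) (σ' P tR))) ∧
  (∀ (P : Bool) (tL tR : Label), GoodTree tL i k → GoodTree tR i k →
    (extLe i k P (σ' P tL) (σ' P tR) →
      extEq i k P (σ' P (node2 (!P) tL tR)) (σ' P tR)) ∧
    (extLe i k P (σ' P tR) (σ' P tL) →
      extEq i k P (σ' P (node2 (!P) tL tR)) (σ' P tL)))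

/-- `S` is a `σ'`-optimal strategy of `P` in `G(t)`: at each position controlled
by `P` it moves to a subtree of lexicographically minimal `σ'`-value for the
appropriate player (depending on whether the position is kept or switched). -/
def IsOptimal (t : Label) (i k : ℕ) (P : Bool)
    (σ' : Bool → Label → Option (ℕ → Ordinal)) (S : List ℕ → Prop) : Prop :=
  IsStrategy t P S ∧
  ∀ u (d : ℕ), S u → ctrl t u = some P → S (u ++ [d]) →
    ∀ d' : ℕ, t (u ++ [d']) ≠ none →
      extLe i k (if kept t u then P else !P)
        (σ' (if kept t u then P else !P) (subtree t (u ++ [d])))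
        (σ' (if kept t u then P else !P) (subtree t (u ++ [d'])))

/-- A partial strategy of `P`: a `P`-deterministic behaviour (nonempty,
prefix-closed, without maximal elements, deterministic at `P`'s positions). -/
def IsPartialStrategy (t : Label) (P : Bool) (S : List ℕ → Prop) : Prop :=
  S [] ∧
  (∀ u, S u → t u ≠ none) ∧
  (∀ u (d : ℕ), S (u ++ [d]) → S u) ∧
  (∀ u, S u → ctrl t u = some P → ∃! d : ℕ, S (u ++ [d])) ∧
  (∀ u, S u → ∃ d : ℕ, S (u ++ [d]))

/-- The position `u` is not reachable by the partial strategy `S` of `P`: it is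
a child, outside `S`, of an opponent position of `S`. -/
def NotReachable (t : Label) (P : Bool) (S : List ℕ → Prop) (u : List ℕ) : Prop :=
  ∃ (w : List ℕ) (d : ℕ), u = w ++ [d] ∧ S w ∧ ¬ S u ∧ t u ≠ none ∧ ctrl t w = some (!P)


lemma strategy_prefix_closed {t : Label} {P : Bool} {S : List ℕ → Prop}
    (hS : IsStrategy t P S) : ∀ u, S u → ∀ v, v <+: u → S v := by
  intro u
  induction u using List.reverseRecOn with
  | nil => intro hu v hv; rwa [List.prefix_nil.mp hv]
  | append_singleton u d ih =>
    intro hu v hv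
    rcases List.prefix_concat_iff.mp hv with h | h
    · rwa [h]
    · exact ih (hS.2.2.1 u d hu) v h

lemma pref_length (α : ℕ → ℕ) (n : ℕ) : (pref α n).length = n := by
  simp [pref]

lemma pref_take (α : ℕ → ℕ) {m n : ℕ} (h : m ≤ n) :
    (pref α n).take m = pref α m := by
  unfold pref
  rw [← List.map_take, List.take_range, Nat.min_eq_left h]

lemma pref_prefix (α : ℕ → ℕ) {m n : ℕ} (h : m ≤ n) :
    pref α m <+: pref α n := by
  rw [← pref_take α h]; exact List.take_prefix _ _

lemma pref_ne (α : ℕ → ℕ) {m n : ℕ} (h : m < n) : pref α m ≠ pref α n := by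
  intro he
  have := congrArg List.length he
  simp only [pref_length] at this
  omega

/-- The relation `≫` associated with a winning strategy `Σ` is well-founded:
it has no infinite descending chain. -/
theorem gg_no_infinite_descending_chain (t : Label) (i k : ℕ) (P : Bool)
    (S : List ℕ → Prop)
    (ht : IsTree t i k) (hwf : WellFormed t)
    (hS : IsWinningStrategy t P S) :
    ¬ ∃ f : ℕ → List ℕ, ∀ n : ℕ, Gg t i k P S (f n) (f (n + 1)) := by
  rintro ⟨f, hf⟩
  obtain ⟨hstr, hwin⟩ := hS
  have hchain : ∀ a b, a ≤ b → f a <+: f b := by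
    intro a b hab
    obtain ⟨c, rfl⟩ := Nat.exists_eq_add_of_le hab
    clear hab
    induction c with
    | zero => exact List.prefix_refl _
    | succ c ih => exact ih.trans (hf (a + c)).2.2.1
  have hlt : ∀ n, (f n).length < (f (n + 1)).length := by
    intro n
    obtain ⟨_, _, hpre, hne, _⟩ := hf n
    exact lt_of_le_of_ne hpre.length_le (fun he => hne (hpre.eq_of_length he))
  have hlen : ∀ n, n ≤ (f n).length := by
    intro n
    induction n with
    | zero => exact Nat.zero_le _
    | succ n ih => have := hlt n; omega
  set α : ℕ → ℕ := fun m => (f (m + 1)).getD m 0 with hα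
  have hagree : ∀ a b m, m < (f a).length → m < (f b).length →
      (f a).getD m 0 = (f b).getD m 0 := by
    have key : ∀ a b, a ≤ b → ∀ m, m < (f a).length →
        (f a).getD m 0 = (f b).getD m 0 := by
      intro a b hab m hm
      have hp := hchain a b hab
      rw [List.getD_eq_getElem _ _ hm,
        List.getD_eq_getElem _ _ (hm.trans_le hp.length_le)]
      exact hp.getElem hm
    intro a b m ha hb
    rcases le_total a b with h | h
    · exact key a b h m ha
    · exact (key b a h m hb).symm
  have hpref : ∀ n n', n ≤ (f n').length → pref α n = (f n').take n := by
    intro n n' hn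
    apply List.ext_getElem
    · rw [pref_length, List.length_take]; omega
    · intro m h1 h2
      have hm : m < n := by rwa [pref_length] at h1
      have hgp : (pref α n)[m] = α m := by simp [pref, hm]
      rw [hgp, List.getElem_take]
      have h3 : m < (f n').length := lt_of_lt_of_le hm hn
      have h4 : m < (f (m + 1)).length := lt_of_lt_of_le (Nat.lt_succ_self m) (hlen (m + 1))
      rw [hα]
      simp only
      rw [hagree (m + 1) n' m h4 h3, List.getD_eq_getElem _ _ h3]
  have hSpref : ∀ n, S (pref α n) := by
    intro n
    rw [hpref n n (hlen n)]
    exact strategy_prefix_closed hstr (f n) (hf n).1 _ (List.take_prefix _ _)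
  have hact : ∀ n, ∃ m, n ≤ m ∧ Active t i k P S (pref α m) := by
    intro n
    obtain ⟨_, _, hfpre, _, w', hw', hfw', hw'f⟩ := hf n
    refine ⟨w'.length, (hlen n).trans hfw'.length_le, ?_⟩
    have hwe : w' = pref α w'.length := by
      rw [hpref w'.length (n + 1) hw'f.length_le]
      exact List.prefix_iff_eq_take.mp hw'f
    rwa [← hwe]
  have hnoneg : ∀ p, t (pref α p) ≠ some Sym.neg := by
    intro p
    obtain ⟨m, hm, hactm⟩ := hact (p + 1)
    obtain ⟨_, j, hj, _, hmin⟩ := hactm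
    exact (hmin (pref α p) (pref_prefix α (by omega)) (pref_ne α (by omega))).1
  have hkept : ∀ n, kept t (pref α n) := by
    intro n
    unfold kept tildeCount
    rw [List.countP_eq_zero.mpr ?_]
    intro m hm
    rw [pref_length] at hm
    simp only [List.mem_range] at hm
    rw [pref_take α hm.le]
    simpa using hnoneg m
  set J : Set ℕ :=
    {j | ∃ m, t (pref α m) = some (Sym.pri j) ∧ Active t i k P S (pref α m)} with hJ
  have hJne : J.Nonempty := by
    obtain ⟨m, _, hactm⟩ := hact 0
    obtain ⟨_, j, hj, _, _⟩ := id hactm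
    exact ⟨j, m, hj, hactm⟩
  set js := sInf J with hjs
  obtain ⟨m0, hm0lab, hm0act⟩ := Nat.sInf_mem hJne
  have hlos : PLosing i k P js := by
    obtain ⟨_, j, hj, hlosj, _⟩ := hm0act
    have : j = js := by rw [hj] at hm0lab; exact (Sym.pri.injEq _ _).mp (Option.some_injective _ hm0lab)
    rwa [this] at hlosj
  have hlow : ∀ n j, t (pref α n) = some (Sym.pri j) → js ≤ j := by
    intro n j hn
    obtain ⟨m, hm, hactm⟩ := hact (n + 1)
    obtain ⟨_, j', hj', _, hmin⟩ := id hactm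
    have h1 : js ≤ j' := Nat.sInf_le ⟨m, hj', hactm⟩
    have h2 : j' ≤ j :=
      (hmin (pref α n) (pref_prefix α (by omega)) (pref_ne α (by omega))).2 j hn
    omega
  have hinfjs : InfOften t α js := by
    apply Set.infinite_of_not_bddAbove
    rintro ⟨b, hb⟩
    obtain ⟨m, hm, hactm⟩ := hact (max (b + 1) (m0 + 1))
    obtain ⟨_, j', hj', _, hmin⟩ := id hactm
    have h1 : js ≤ j' := Nat.sInf_le ⟨m, hj', hactm⟩
    have h2 : j' ≤ js :=
      (hmin (pref α m0) (pref_prefix α (by omega)) (pref_ne α (by omega))).2 js hm0lab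
    have hj'' : j' = js := le_antisymm h2 h1
    have heff : effPri t (pref α m) = some js := by
      unfold effPri
      rw [hj']
      show some (if kept t (pref α m) then j' else j' + 1) = some js
      rw [if_pos (hkept m), hj'']
    have := hb (Set.mem_setOf.mpr heff)
    omega
  obtain ⟨j0, hinf0, hmin0, hpar0⟩ := hwin α hSpref
  have hle1 : j0 ≤ js := by
    by_contra h
    push_neg at h
    exact hmin0 js h hinfjs
  have hle2 : js ≤ j0 := by
    obtain ⟨n, hn⟩ := hinf0.nonempty
    simp only [Set.mem_setOf_eq] at hn
    unfold effPri at hn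
    cases hlab : t (pref α n) with
    | none => rw [hlab] at hn; exact absurd (hn : (none : Option ℕ) = some j0) (Option.some_ne_none j0).symm
    | some s =>
      cases s with
      | pri j =>
        rw [hlab] at hn
        have hn' : some (if kept t (pref α n) then j else j + 1) = some j0 := hn
        rw [if_pos (hkept n)] at hn'
        have : j = j0 := Option.some_injective _ hn'
        exact this ▸ hlow n j hlab
      | choice b => rw [hlab] at hn; exact absurd (hn : (none : Option ℕ) = some j0) (Option.some_ne_none j0).symm
      | neg => rw [hlab] at hn; exact absurd (hn : (none : Option ℕ) = some j0) (Option.some_ne_none j0).symm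
  have heq : j0 = js := le_antisymm hle1 hle2
  obtain ⟨_, _, hodd⟩ := hlos
  rw [heq] at hpar0
  cases P with
  | true =>
    have he : Even js := hpar0.mpr rfl
    have ho : Odd js := hodd.mpr rfl
    exact (Nat.not_odd_iff_even.mpr he) ho
  | false =>
    have he : ¬ Even js := fun h => by simpa using hpar0.mp h
    have ho : ¬ Odd js := fun h => by simpa using hodd.mp h
    rcases Nat.even_or_odd js with h | h
    · exact he h
    · exact ho h


end UnambSig
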